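/- Let α ∈ ℕ and ϱ ∈ (0,1) with ϱ = ε/(ε+γ) = δ/(δ+β), where ε, γ, δ, β > 0. Then the homogeneous product measure on {0,...,α}^{Λ_N} with Binomial(α, ϱ) marginals is reversible for the generator L_N of SEP(α) with open boundaries: for all functions f, g on the configuration space, ⟨L_N f, g⟩_ν = ⟨f, L_N g⟩_ν. -/

import Mathlib

/-!
Reversibility is detailed balance summed over configurations. The generator is a sum of jump
pairs `c (f ∘ T - f) + c' (f ∘ T' - f)` with `T`, `T'` mutually inverse between the supports of
the rates, and such a pair is self-adjoint for `ν` as soon as `c ν = (c' ∘ T) (ν ∘ T)` on the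
support of `c`: reindex the sum along `T`. For the binomial product measure every detailed-balance
identity reduces to the single-site one `k (1 - ϱ) Bin(k) = (α - k + 1) ϱ Bin(k - 1)`. A bulk jump
`x → y` is a particle added at `y` followed by one removed at `x`, and at the boundary the rates
enter only through `γ ϱ = ε (1 - ϱ)` and `β ϱ = δ (1 - ϱ)`, which is what `ϱ = ε/(ε+γ) = δ/(δ+β)`
says.
-/

/-- Decrease the occupation number by one (no-op at 0). -/
def decOcc (α : ℕ) (k : Fin (α + 1)) : Fin (α + 1) :=
  ⟨k.val - 1, lt_of_le_of_lt (Nat.sub_le _ _) k.isLt⟩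

/-- Increase the occupation number by one (no-op at α). -/
def incOcc (α : ℕ) (k : Fin (α + 1)) : Fin (α + 1) :=
  ⟨min (k.val + 1) α, Nat.lt_succ_of_le (min_le_right _ _)⟩

/-- The configuration `η^{i,j}`: a particle moves from site `i` to site `j`. -/
def moveConf (α n : ℕ) (η : Fin n → Fin (α + 1)) (i j : Fin n) : Fin n → Fin (α + 1) :=
  fun z => if z = i then decOcc α (η i) else if z = j then incOcc α (η j) else η z

/-- Add a particle at site `i` (boundary injection). -/
def addConf (α n : ℕ) (η : Fin n → Fin (α + 1)) (i : Fin n) : Fin n → Fin (α + 1) :=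
  Function.update η i (incOcc α (η i))

/-- Remove a particle at site `i` (boundary absorption). -/
def remConf (α n : ℕ) (η : Fin n → Fin (α + 1)) (i : Fin n) : Fin n → Fin (α + 1) :=
  Function.update η i (decOcc α (η i))

/-- The generator of `SEP(α)` on `Λ_N = {1,…,N-1}` (here `n = N - 1` sites, site `i`
corresponding to `x = i+1`) with open boundaries: bulk exchange rates
`c_{x,y}(η) = η(x)(α - η(y))`, and boundary rates `γ η(1)`, `ε(α-η(1))` on the left and
`β η(N-1)`, `δ(α-η(N-1))` on the right, all scaled by `N^{-θ}`. -/
noncomputable def sepGen (α n : ℕ) (θ ε γ δ β : ℝ) (N : ℕ)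
    (f : (Fin n → Fin (α + 1)) → ℝ) (η : Fin n → Fin (α + 1)) : ℝ :=
  (∑ i : Fin n, ∑ j : Fin n, if (j : ℕ) = (i : ℕ) + 1 then
      ((η i : ℕ) : ℝ) * ((α : ℝ) - ((η j : ℕ) : ℝ)) * (f (moveConf α n η i j) - f η)
      + ((η j : ℕ) : ℝ) * ((α : ℝ) - ((η i : ℕ) : ℝ)) * (f (moveConf α n η j i) - f η)
    else 0)
  + (if h : 0 < n then
      ((N : ℝ) ^ (-θ)) *
        (γ * ((η ⟨0, h⟩ : ℕ) : ℝ) * (f (remConf α n η ⟨0, h⟩) - f η)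
          + ε * ((α : ℝ) - ((η ⟨0, h⟩ : ℕ) : ℝ)) * (f (addConf α n η ⟨0, h⟩) - f η))
      + ((N : ℝ) ^ (-θ)) *
        (β * ((η ⟨n - 1, Nat.sub_lt h one_pos⟩ : ℕ) : ℝ)
            * (f (remConf α n η ⟨n - 1, Nat.sub_lt h one_pos⟩) - f η)
          + δ * ((α : ℝ) - ((η ⟨n - 1, Nat.sub_lt h one_pos⟩ : ℕ) : ℝ))
            * (f (addConf α n η ⟨n - 1, Nat.sub_lt h one_pos⟩) - f η))
    else 0)

open Finset

section Reversibility

variable {C : Type*} [Fintype C]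

def IsReversible (ν : C → ℝ) (L : (C → ℝ) → C → ℝ) : Prop :=
  ∀ f g, ∑ η, L f η * g η * ν η = ∑ η, f η * L g η * ν η

namespace IsReversible

variable {ν : C → ℝ}

theorem zero : IsReversible ν fun _ _ => 0 := by
  intro f g
  simp

theorem add {L₁ L₂ : (C → ℝ) → C → ℝ} (h₁ : IsReversible ν L₁) (h₂ : IsReversible ν L₂) :
    IsReversible ν fun f η => L₁ f η + L₂ f η := by
  intro f g
  simp only [add_mul, mul_add, sum_add_distrib, h₁ f g, h₂ f g]

theorem const_mul {L : (C → ℝ) → C → ℝ} (h : IsReversible ν L) (a : ℝ) :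
    IsReversible ν fun f η => a * L f η := by
  intro f g
  have := congrArg (a * ·) (h f g)
  simp only [mul_sum] at this
  convert this using 2 <;> ring

theorem sum {ι : Type*} {s : Finset ι} {L : ι → (C → ℝ) → C → ℝ}
    (h : ∀ i ∈ s, IsReversible ν (L i)) : IsReversible ν fun f η => ∑ i ∈ s, L i f η := by
  intro f g
  simp only [sum_mul, mul_sum]
  rw [sum_comm, sum_congr rfl fun i hi => h i hi f g, sum_comm]

theorem dite {p : Prop} [Decidable p] {L : p → (C → ℝ) → C → ℝ}
    (h : ∀ hp, IsReversible ν (L hp)) :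
    IsReversible ν fun f η => if hp : p then L hp f η else 0 := by
  by_cases hp : p
  · simpa only [dif_pos hp] using h hp
  · simpa only [dif_neg hp] using zero

theorem ite {p : Prop} [Decidable p] {L : (C → ℝ) → C → ℝ}
    (h : p → IsReversible ν L) : IsReversible ν fun f η => if p then L f η else 0 :=
  dite h

end IsReversible

end Reversibility

section JumpPair

variable {C : Type*} (ν c c' : C → ℝ) (T T' : C → C)

def AreReverseJumps : Prop :=
  (∀ η, c η ≠ 0 → c' (T η) ≠ 0 ∧ T' (T η) = η) ∧ (∀ η, c' η ≠ 0 → c (T' η) ≠ 0 ∧ T (T' η) = η)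

variable {ν c c' T T'}

theorem sum_rate_mul_comp_eq [Fintype C] (hT : AreReverseJumps c c' T T')
    (hdb : ∀ η, c η ≠ 0 → c η * ν η = c' (T η) * ν (T η)) (F G : C → ℝ) :
    ∑ η, c η * ν η * F (T η) * G η = ∑ η, c' η * ν η * F η * G (T' η) := by
  classical
  calc ∑ η, c η * ν η * F (T η) * G η
      = ∑ η with c η ≠ 0, c η * ν η * F (T η) * G η :=
        (sum_filter_of_ne fun _ _ =>
          left_ne_zero_of_mul ∘ left_ne_zero_of_mul ∘ left_ne_zero_of_mul).symm
    _ = ∑ η with c' η ≠ 0, c' η * ν η * F η * G (T' η) := by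
        refine sum_nbij' T T' (fun η hη => ?_) (fun η hη => ?_) (fun η hη => ?_)
          (fun η hη => ?_) (fun η hη => ?_) <;>
          simp only [mem_filter, mem_univ, true_and] at hη ⊢
        · exact (hT.1 η hη).1
        · exact (hT.2 η hη).1
        · exact (hT.1 η hη).2
        · exact (hT.2 η hη).2
        · rw [(hT.1 η hη).2, hdb η hη]
    _ = ∑ η, c' η * ν η * F η * G (T' η) :=
        sum_filter_of_ne fun _ _ => left_ne_zero_of_mul ∘ left_ne_zero_of_mul ∘ left_ne_zero_of_mul

theorem AreReverseJumps.symm (hT : AreReverseJumps c c' T T') : AreReverseJumps c' c T' T :=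
  ⟨hT.2, hT.1⟩

theorem isReversible_jumpPair [Fintype C] (hT : AreReverseJumps c c' T T')
    (hdb : ∀ η, c η ≠ 0 → c η * ν η = c' (T η) * ν (T η)) :
    IsReversible ν fun f η => c η * (f (T η) - f η) + c' η * (f (T' η) - f η) := by
  have hdb' : ∀ η, c' η ≠ 0 → c' η * ν η = c (T' η) * ν (T' η) := fun η hη => by
    obtain ⟨hc, hTT'⟩ := hT.2 η hη
    rw [hdb _ hc, hTT']
  intro f g
  have e₁ := sum_rate_mul_comp_eq hT hdb f g
  have e₂ := sum_rate_mul_comp_eq hT.symm hdb' f g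
  have expand : ∀ F G : C → ℝ, ∑ η, (c η * (F (T η) - F η) + c' η * (F (T' η) - F η)) * G η * ν η
      = ∑ η, c η * ν η * F (T η) * G η + ∑ η, c' η * ν η * F (T' η) * G η
        - ∑ η, (c η + c' η) * ν η * F η * G η := fun F G => by
    rw [← sum_add_distrib, ← sum_sub_distrib]
    exact sum_congr rfl fun η _ => by ring
  have hswap : ∑ η, f η * (c η * (g (T η) - g η) + c' η * (g (T' η) - g η)) * ν η
      = ∑ η, (c η * (g (T η) - g η) + c' η * (g (T' η) - g η)) * f η * ν η :=
    sum_congr rfl fun η _ => by ring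
  rw [hswap, expand, expand, e₁, e₂]
  simp only [mul_right_comm _ (f _), add_mul]
  ring

section Configurations

variable {α n : ℕ}

theorem incOcc_val {k : Fin (α + 1)} (h : (k : ℕ) < α) : (incOcc α k : ℕ) = k + 1 := by
  simp only [incOcc]
  omega

theorem incOcc_decOcc {k : Fin (α + 1)} (h : (k : ℕ) ≠ 0) : incOcc α (decOcc α k) = k := by
  have := k.isLt
  ext
  simp only [incOcc, decOcc]
  omega

theorem decOcc_incOcc {k : Fin (α + 1)} (h : (k : ℕ) < α) : decOcc α (incOcc α k) = k := by
  ext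
  simp only [incOcc, decOcc]
  omega

theorem sub_occ_ne_zero_iff {k : Fin (α + 1)} : (α : ℝ) - (k : ℕ) ≠ 0 ↔ (k : ℕ) < α := by
  have := k.isLt
  rw [sub_ne_zero, ne_comm, Ne, Nat.cast_inj]
  omega

theorem occ_mul_sub_occ_ne_zero_iff {k l : Fin (α + 1)} :
    ((k : ℕ) : ℝ) * ((α : ℝ) - (l : ℕ)) ≠ 0 ↔ (k : ℕ) ≠ 0 ∧ (l : ℕ) < α := by
  rw [mul_ne_zero_iff, Nat.cast_ne_zero, sub_occ_ne_zero_iff]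

theorem remConf_self (η : Fin n → Fin (α + 1)) (b : Fin n) :
    remConf α n η b b = decOcc α (η b) :=
  Function.update_self ..

theorem addConf_self (η : Fin n → Fin (α + 1)) (b : Fin n) :
    addConf α n η b b = incOcc α (η b) :=
  Function.update_self ..

theorem addConf_of_ne (η : Fin n → Fin (α + 1)) {b z : Fin n} (h : z ≠ b) :
    addConf α n η b z = η z :=
  Function.update_of_ne h ..

theorem addConf_remConf (η : Fin n → Fin (α + 1)) {b : Fin n} (h : (η b : ℕ) ≠ 0) :
    addConf α n (remConf α n η b) b = η := by
  simp [addConf, remConf, incOcc_decOcc h]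

theorem remConf_addConf (η : Fin n → Fin (α + 1)) {b : Fin n} (h : (η b : ℕ) < α) :
    remConf α n (addConf α n η b) b = η := by
  simp [addConf, remConf, decOcc_incOcc h]

theorem moveConf_eq_remConf_addConf (η : Fin n → Fin (α + 1)) {i j : Fin n} (hij : i ≠ j) :
    moveConf α n η i j = remConf α n (addConf α n η j) i := by
  ext z
  by_cases hzi : z = i
  · subst hzi
    simp [moveConf, remConf, addConf, Function.update_of_ne hij]
  · by_cases hzj : z = j
    · subst hzj
      simp [moveConf, remConf, addConf, hzi]
    · simp [moveConf, remConf, addConf, hzi, hzj]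

theorem moveConf_moveConf (η : Fin n → Fin (α + 1)) {i j : Fin n} (hij : i ≠ j)
    (hi : (η i : ℕ) ≠ 0) (hj : (η j : ℕ) < α) : moveConf α n (moveConf α n η i j) j i = η := by
  have hi' : (addConf α n η j i : ℕ) ≠ 0 := by rwa [addConf_of_ne η hij]
  rw [moveConf_eq_remConf_addConf _ hij, moveConf_eq_remConf_addConf _ hij.symm,
    addConf_remConf _ hi', remConf_addConf _ hj]

theorem moveConf_apply_left (η : Fin n → Fin (α + 1)) (i j : Fin n) :
    moveConf α n η i j i = decOcc α (η i) := by
  simp [moveConf]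

theorem moveConf_apply_right (η : Fin n → Fin (α + 1)) {i j : Fin n} (hij : i ≠ j) :
    moveConf α n η i j j = incOcc α (η j) := by
  simp [moveConf, hij.symm]

end Configurations

section BinomialWeight

def binomWeight (α : ℕ) (ϱ : ℝ) (k : ℕ) : ℝ :=
  α.choose k * ϱ ^ k * (1 - ϱ) ^ (α - k)

def binomProd (α n : ℕ) (ϱ : ℝ) (η : Fin n → Fin (α + 1)) : ℝ :=
  ∏ z, binomWeight α ϱ (η z)

variable {α n : ℕ} {ϱ : ℝ}

theorem binomWeight_succ {k : ℕ} (hk : k < α) :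
    ((k : ℝ) + 1) * binomWeight α ϱ (k + 1) * (1 - ϱ) = ((α : ℝ) - k) * binomWeight α ϱ k * ϱ := by
  have hchoose : (α.choose (k + 1) : ℝ) * (k + 1) = α.choose k * ((α : ℝ) - k) := by
    rw [← Nat.cast_sub hk.le]
    exact_mod_cast Nat.choose_succ_right_eq α k
  have hexp : α - k = α - (k + 1) + 1 := by omega
  simp only [binomWeight, hexp, pow_succ]
  linear_combination ϱ ^ k * (1 - ϱ) ^ (α - (k + 1)) * ϱ * (1 - ϱ) * hchoose

theorem binomProd_update (η : Fin n → Fin (α + 1)) (b : Fin n) (x : Fin (α + 1)) :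
    binomProd α n ϱ (Function.update η b x)
      = binomWeight α ϱ x * ∏ z ∈ univ \ {b}, binomWeight α ϱ (η z) := by
  rw [binomProd, ← prod_update_of_mem (mem_univ b)]
  exact prod_congr rfl fun z _ =>
    Function.apply_update (fun _ => binomWeight α ϱ ∘ Fin.val) η b x z

theorem occ_mul_binomProd (η : Fin n → Fin (α + 1)) {b : Fin n} (hb : (η b : ℕ) ≠ 0) :
    ((η b : ℕ) : ℝ) * (1 - ϱ) * binomProd α n ϱ η
      = ((α : ℝ) - (remConf α n η b b : ℕ)) * ϱ * binomProd α n ϱ (remConf α n η b) := by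
  obtain ⟨m, hm⟩ : ∃ m, (η b : ℕ) = m + 1 := Nat.exists_eq_add_one.mpr (Nat.pos_of_ne_zero hb)
  have hdec : (decOcc α (η b) : ℕ) = m := by simp [decOcc, hm]
  have hstep := binomWeight_succ (ϱ := ϱ) (show m < α by have := (η b).isLt; omega)
  have hη : binomProd α n ϱ η = binomProd α n ϱ (Function.update η b (η b)) := by simp
  rw [remConf_self, hdec, hη, remConf, binomProd_update, binomProd_update, hdec, hm]
  push_cast
  linear_combination (∏ z ∈ univ \ {b}, binomWeight α ϱ (η z)) * hstep

end BinomialWeight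

section Generators

def bondGen (α n : ℕ) (i j : Fin n) (f : (Fin n → Fin (α + 1)) → ℝ)
    (η : Fin n → Fin (α + 1)) : ℝ :=
  ((η i : ℕ) : ℝ) * ((α : ℝ) - ((η j : ℕ) : ℝ)) * (f (moveConf α n η i j) - f η)
    + ((η j : ℕ) : ℝ) * ((α : ℝ) - ((η i : ℕ) : ℝ)) * (f (moveConf α n η j i) - f η)

def reservoirGen (α n : ℕ) (rateOut rateIn : ℝ) (b : Fin n) (f : (Fin n → Fin (α + 1)) → ℝ)
    (η : Fin n → Fin (α + 1)) : ℝ :=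
  rateOut * ((η b : ℕ) : ℝ) * (f (remConf α n η b) - f η)
    + rateIn * ((α : ℝ) - ((η b : ℕ) : ℝ)) * (f (addConf α n η b) - f η)

theorem sepGen_eq (α n : ℕ) (θ ε γ δ β : ℝ) (N : ℕ) :
    sepGen α n θ ε γ δ β N = fun f η =>
      (∑ i : Fin n, ∑ j : Fin n, if (j : ℕ) = (i : ℕ) + 1 then bondGen α n i j f η else 0)
        + if h : 0 < n then
            (N : ℝ) ^ (-θ) * reservoirGen α n γ ε ⟨0, h⟩ f η
              + (N : ℝ) ^ (-θ) * reservoirGen α n β δ ⟨n - 1, Nat.sub_lt h one_pos⟩ f η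
          else 0 :=
  rfl

variable {α n : ℕ} {ϱ : ℝ}

theorem bondGen_areReverseJumps {i j : Fin n} (hij : i ≠ j) :
    AreReverseJumps (fun η : Fin n → Fin (α + 1) => ((η i : ℕ) : ℝ) * ((α : ℝ) - (η j : ℕ)))
      (fun η => ((η j : ℕ) : ℝ) * ((α : ℝ) - (η i : ℕ)))
      (fun η => moveConf α n η i j) (fun η => moveConf α n η j i) := by
  have key : ∀ {i j : Fin n}, i ≠ j → ∀ η : Fin n → Fin (α + 1),
      ((η i : ℕ) : ℝ) * ((α : ℝ) - (η j : ℕ)) ≠ 0 →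
      ((moveConf α n η i j j : ℕ) : ℝ) * ((α : ℝ) - (moveConf α n η i j i : ℕ)) ≠ 0
        ∧ moveConf α n (moveConf α n η i j) j i = η := by
    intro i j hij η hη
    rw [occ_mul_sub_occ_ne_zero_iff] at hη ⊢
    have := (η i).isLt
    rw [moveConf_apply_right η hij, moveConf_apply_left, incOcc_val hη.2]
    exact ⟨⟨by omega, by simp only [decOcc]; omega⟩, moveConf_moveConf η hij hη.1 hη.2⟩
  exact ⟨key hij, key hij.symm⟩

theorem bondGen_detailedBalance (hϱ₀ : ϱ ≠ 0) {i j : Fin n} (hij : i ≠ j)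
    (η : Fin n → Fin (α + 1)) (hη : ((η i : ℕ) : ℝ) * ((α : ℝ) - (η j : ℕ)) ≠ 0) :
    ((η i : ℕ) : ℝ) * ((α : ℝ) - (η j : ℕ)) * binomProd α n ϱ η
      = ((moveConf α n η i j j : ℕ) : ℝ) * ((α : ℝ) - (moveConf α n η i j i : ℕ))
        * binomProd α n ϱ (moveConf α n η i j) := by
  rw [occ_mul_sub_occ_ne_zero_iff] at hη
  have hi₁ : addConf α n η j i = η i := addConf_of_ne η hij
  have hj₁ : addConf α n η j j = incOcc α (η j) := addConf_self η j
  -- `η` and `moveConf η i j` both arise from `addConf η j` by removing a particle, at `j` and `i`.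
  have hj := occ_mul_binomProd (ϱ := ϱ) (addConf α n η j) (b := j)
    (by rw [hj₁, incOcc_val hη.2]; omega)
  have hi := occ_mul_binomProd (ϱ := ϱ) (addConf α n η j) (b := i) (by rw [hi₁]; exact hη.1)
  rw [remConf_self, hj₁, decOcc_incOcc hη.2, remConf_addConf η hη.2] at hj
  rw [remConf_self, hi₁, ← moveConf_eq_remConf_addConf η hij] at hi
  rw [moveConf_apply_left, moveConf_apply_right η hij]
  apply mul_left_cancel₀ hϱ₀
  linear_combination ((incOcc α (η j) : ℕ) : ℝ) * hi - ((η i : ℕ) : ℝ) * hj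

theorem isReversible_bondGen (hϱ₀ : ϱ ≠ 0) {i j : Fin n} (hij : i ≠ j) :
    IsReversible (binomProd α n ϱ) (bondGen α n i j) :=
  isReversible_jumpPair (bondGen_areReverseJumps hij) (bondGen_detailedBalance hϱ₀ hij)

variable {rateOut rateIn : ℝ}

theorem reservoirGen_areReverseJumps (hϱ₀ : ϱ ≠ 0) (hϱ₁ : ϱ ≠ 1)
    (hrate : rateOut * ϱ = rateIn * (1 - ϱ)) (b : Fin n) :
    AreReverseJumps (fun η : Fin n → Fin (α + 1) => rateOut * ((η b : ℕ) : ℝ))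
      (fun η => rateIn * ((α : ℝ) - (η b : ℕ)))
      (fun η => remConf α n η b) (fun η => addConf α n η b) := by
  have hrate₀ : rateOut = 0 ↔ rateIn = 0 := by
    have : 1 - ϱ ≠ 0 := sub_ne_zero.mpr hϱ₁.symm
    constructor <;> rintro rfl <;> simp_all
  refine ⟨fun η hη => ?_, fun η hη => ?_⟩ <;> dsimp only at hη ⊢
  · rw [mul_ne_zero_iff, Nat.cast_ne_zero] at hη
    refine ⟨mul_ne_zero (hrate₀.not.mp hη.1) ?_, addConf_remConf η hη.2⟩
    rw [sub_occ_ne_zero_iff, remConf_self]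
    have := (η b).isLt
    simp only [decOcc]
    omega
  · rw [mul_ne_zero_iff, sub_occ_ne_zero_iff] at hη
    refine ⟨mul_ne_zero (hrate₀.not.mpr hη.1) ?_, remConf_addConf η hη.2⟩
    rw [addConf_self, incOcc_val hη.2]
    exact Nat.cast_ne_zero.mpr (Nat.succ_ne_zero _)

theorem reservoirGen_detailedBalance (hϱ₁ : ϱ ≠ 1) (hrate : rateOut * ϱ = rateIn * (1 - ϱ))
    (b : Fin n) (η : Fin n → Fin (α + 1)) (hη : rateOut * ((η b : ℕ) : ℝ) ≠ 0) :
    rateOut * ((η b : ℕ) : ℝ) * binomProd α n ϱ η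
      = rateIn * ((α : ℝ) - (remConf α n η b b : ℕ)) * binomProd α n ϱ (remConf α n η b) := by
  have h := occ_mul_binomProd (ϱ := ϱ) η (Nat.cast_ne_zero.mp (right_ne_zero_of_mul hη))
  apply mul_left_cancel₀ (sub_ne_zero.mpr hϱ₁.symm)
  linear_combination rateOut * h
    + ((α : ℝ) - (remConf α n η b b : ℕ)) * binomProd α n ϱ (remConf α n η b) * hrate

theorem isReversible_reservoirGen (hϱ₀ : ϱ ≠ 0) (hϱ₁ : ϱ ≠ 1)
    (hrate : rateOut * ϱ = rateIn * (1 - ϱ)) (b : Fin n) :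
    IsReversible (binomProd α n ϱ) (reservoirGen α n rateOut rateIn b) :=
  isReversible_jumpPair (reservoirGen_areReverseJumps hϱ₀ hϱ₁ hrate b)
    (reservoirGen_detailedBalance hϱ₁ hrate b)

theorem isReversible_sepGen {θ ε γ δ β : ℝ} (N : ℕ) (hϱ₀ : ϱ ≠ 0) (hϱ₁ : ϱ ≠ 1)
    (hγε : γ * ϱ = ε * (1 - ϱ)) (hβδ : β * ϱ = δ * (1 - ϱ)) :
    IsReversible (binomProd α n ϱ) (sepGen α n θ ε γ δ β N) := by
  rw [sepGen_eq]
  exact .add (.sum fun i _ => .sum fun j _ => .ite fun hij =>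
      isReversible_bondGen hϱ₀ (Fin.ne_of_val_ne (by omega)))
    (.dite fun _ => .add (.const_mul (isReversible_reservoirGen hϱ₀ hϱ₁ hγε _) _)
      (.const_mul (isReversible_reservoirGen hϱ₀ hϱ₁ hβδ _) _))

end Generators

theorem sep_reversible_general (α N : ℕ) (θ ε γ δ β ϱ : ℝ)
    (hε : 0 < ε) (hγ : 0 < γ) (hδ : 0 < δ) (hβ : 0 < β)
    (hϱ1 : ϱ = ε / (ε + γ)) (hϱ2 : ϱ = δ / (δ + β))
    (ν : (Fin (N - 1) → Fin (α + 1)) → ℝ)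
    (hν : ∀ η, ν η = ∏ i, (α.choose (η i) : ℝ) * ϱ ^ ((η i : ℕ))
        * (1 - ϱ) ^ (α - (η i : ℕ)))
    (f g : (Fin (N - 1) → Fin (α + 1)) → ℝ) :
    ∑ η, sepGen α (N - 1) θ ε γ δ β N f η * g η * ν η
      = ∑ η, f η * sepGen α (N - 1) θ ε γ δ β N g η * ν η := by
  have hεγ : ε + γ ≠ 0 := by positivity
  have hδβ : δ + β ≠ 0 := by positivity
  have hϱ_ne_zero : ϱ ≠ 0 := by rw [hϱ1]; positivity
  have hϱ_ne_one : ϱ ≠ 1 := by rw [hϱ1, Ne, div_eq_one_iff_eq hεγ]; linarith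
  have hγε : γ * ϱ = ε * (1 - ϱ) := by rw [hϱ1]; field_simp; ring
  have hβδ : β * ϱ = δ * (1 - ϱ) := by rw [hϱ2]; field_simp; ring
  obtain rfl : ν = binomProd α (N - 1) ϱ := funext hν
  exact isReversible_sepGen N hϱ_ne_zero hϱ_ne_one hγε hβδ f g

/-- The homogeneous product Binomial(α, ϱ) measure with
`ϱ = ε/(ε+γ) = δ/(δ+β)` is reversible for the generator of SEP(α) with open boundaries. -/
theorem sep_reversible (α N : ℕ) (hN : 2 ≤ N) (θ ε γ δ β ϱ : ℝ)
    (hε : 0 < ε) (hγ : 0 < γ) (hδ : 0 < δ) (hβ : 0 < β)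
    (hϱ1 : ϱ = ε / (ε + γ)) (hϱ2 : ϱ = δ / (δ + β))
    (ν : (Fin (N - 1) → Fin (α + 1)) → ℝ)
    (hν : ∀ η, ν η = ∏ i, (α.choose (η i) : ℝ) * ϱ ^ ((η i : ℕ))
        * (1 - ϱ) ^ (α - (η i : ℕ)))
    (f g : (Fin (N - 1) → Fin (α + 1)) → ℝ) :
    ∑ η, sepGen α (N - 1) θ ε γ δ β N f η * g η * ν η
      = ∑ η, f η * sepGen α (N - 1) θ ε γ δ β N g η * ν η :=
  sep_reversible_general α N θ ε γ δ β ϱ hε hγ hδ hβ hϱ1 hϱ2 ν hν f g
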